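/- Let C be a field of characteristic zero and let p ∈ C[t,x] be a polynomial. For integers m, n with n ≠ 0, the polynomial p satisfies p(t+n, x+m) = p(t,x) if and only if p = h(mt - nx) for some univariate polynomial h ∈ C[z]. -/

import Mathlib

/-!
In the coordinates `t` and `u = m t - n x` (an invertible change of variables since `n ≠ 0`)
the shift `(t, x) ↦ (t + n, x + m)` fixes `u` and moves `t` by `n`. Viewing `p` as a polynomial
in `t` over `K[u]`, invariance under `t ↦ t + n` makes `p(t) - p(0)` vanish at the infinitely many
points `t = k n`, so `p` is constant in `t`, that is, `p ∈ K[u]`.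
-/

open MvPolynomial

/-- The shift automorphism of `K[t,x]` sending `t ↦ t + a`, `x ↦ x + b`
(variable `0` is `t`, variable `1` is `x`). -/
noncomputable def shift2 (K : Type*) [Field K] [CharZero K] (a b : ℤ) :
    MvPolynomial (Fin 2) K →ₐ[K] MvPolynomial (Fin 2) K :=
  aeval (fun i => X i + MvPolynomial.C (if i = 0 then (a : K) else (b : K)))

theorem Polynomial.eq_C_of_comp_X_add_C_eq_self {R : Type*} [CommRing R] [IsDomain R]
    [CharZero R] {c : R} (hc : c ≠ 0) {f : Polynomial R} (hf : f.comp (X + C c) = f) :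
    f = C (f.eval 0) := by
  have periodic (k : ℕ) : f.eval (k * c) = f.eval 0 := by
    induction k with
    | zero => simp
    | succ k ih =>
      rw [← ih]
      conv_rhs => rw [← hf]
      simp [add_mul]
  refine eq_of_infinite_eval_eq _ _ (Set.Infinite.mono ?_ <|
    Set.infinite_range_of_injective (f := fun k : ℕ => (k : R) * c) fun k l hkl => ?_)
  · rintro _ ⟨k, rfl⟩
    simp [periodic k]
  · exact_mod_cast mul_right_cancel₀ hc hkl

namespace MvPolynomial

variable {R : Type*} [CommSemiring R]

theorem finSuccEquiv_X_one : finSuccEquiv R 1 (X 1) = Polynomial.C (X 0) := by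
  simpa using finSuccEquiv_X_succ (R := R) (n := 1) (j := 0)

theorem finSuccEquiv_aeval_X_one (h : Polynomial R) :
    finSuccEquiv R 1 (Polynomial.aeval (X 1) h) =
      Polynomial.C ((uniqueAlgEquiv R (Fin 1)).symm h) := by
  have hom : (finSuccEquiv R 1).toAlgHom.comp (Polynomial.aeval (X 1)) =
      Polynomial.CAlgHom.comp (uniqueAlgEquiv R (Fin 1)).symm.toAlgHom :=
    Polynomial.algHom_ext (by simp [finSuccEquiv_X_one])
  exact DFunLike.congr_fun hom h

end MvPolynomial

section ShiftFixed

variable {K : Type*} [Field K] [CharZero K]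

theorem finSuccEquiv_shift2 (c : ℤ) (q : MvPolynomial (Fin 2) K) :
    finSuccEquiv K 1 (shift2 K c 0 q) =
      (finSuccEquiv K 1 q).comp (Polynomial.X + Polynomial.C (C (c : K))) := by
  have hom : (finSuccEquiv K 1).toAlgHom.comp (shift2 K c 0) =
      ((Polynomial.aeval (Polynomial.X + Polynomial.C (C (c : K)))).restrictScalars K).comp
        (finSuccEquiv K 1).toAlgHom := by
    refine algHom_ext fun i => ?_
    fin_cases i
    · simp [shift2, finSuccEquiv_X_zero]
    · simp [shift2, finSuccEquiv_X_one]
  simpa [Polynomial.comp_eq_aeval] using DFunLike.congr_fun hom q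

theorem shift2_zero_eq_self_iff {c : ℤ} (hc : c ≠ 0) {q : MvPolynomial (Fin 2) K} :
    shift2 K c 0 q = q ↔ ∃ h : Polynomial K, q = Polynomial.aeval (X 1) h := by
  constructor
  · intro hq
    have hconst := Polynomial.eq_C_of_comp_X_add_C_eq_self (c := C (c : K)) (by simpa using hc)
      (by rw [← finSuccEquiv_shift2, hq])
    refine ⟨uniqueAlgEquiv K (Fin 1) ((finSuccEquiv K 1 q).eval 0),
      (finSuccEquiv K 1).injective ?_⟩
    rwa [finSuccEquiv_aeval_X_one, AlgEquiv.symm_apply_apply]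
  · rintro ⟨h, rfl⟩
    rw [← Polynomial.aeval_algHom_apply]
    simp [shift2]

variable (K) in
noncomputable def linearChangeEquiv (m n : ℤ) (hn : n ≠ 0) :
    MvPolynomial (Fin 2) K ≃ₐ[K] MvPolynomial (Fin 2) K :=
  have hn' : (n : K) ≠ 0 := Int.cast_ne_zero.mpr hn
  AlgEquiv.ofAlgHom (aeval ![X 0, (m : K) • X 0 - (n : K) • X 1])
    (aeval ![X 0, (n : K)⁻¹ • ((m : K) • X 0 - X 1)])
    (algHom_ext fun i => by fin_cases i <;> simp [smul_sub, smul_smul, hn'])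
    (algHom_ext fun i => by fin_cases i <;> simp [smul_sub, smul_smul, hn'])

variable {m n : ℤ} (hn : n ≠ 0)

theorem linearChangeEquiv_aeval_X_one (h : Polynomial K) :
    linearChangeEquiv K m n hn (Polynomial.aeval (X 1) h) =
      Polynomial.aeval ((m : K) • X 0 - (n : K) • X 1) h := by
  rw [← AlgEquiv.coe_toAlgHom, ← Polynomial.aeval_algHom_apply]
  simp [linearChangeEquiv]

theorem shift2_linearChangeEquiv (p : MvPolynomial (Fin 2) K) :
    shift2 K n m (linearChangeEquiv K m n hn p) =
      linearChangeEquiv K m n hn (shift2 K n 0 p) := by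
  have hom : (shift2 K n m).comp (linearChangeEquiv K m n hn).toAlgHom =
      (linearChangeEquiv K m n hn).toAlgHom.comp (shift2 K n 0) := by
    refine algHom_ext fun i => ?_
    fin_cases i
    · simp [linearChangeEquiv, shift2]
    · simp [linearChangeEquiv, shift2, smul_eq_C_mul]
      ring
  exact DFunLike.congr_fun hom p

end ShiftFixed

/-- For a field `K` of characteristic zero, `p ∈ K[t,x]` and integers `m, n` with `n ≠ 0`:
`p(t+n, x+m) = p(t,x)` iff `p = h(mt - nx)` for some univariate polynomial `h`. -/
theorem shift_fixed_iff_integer_linear (K : Type*) [Field K] [CharZero K]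
    (p : MvPolynomial (Fin 2) K) (m n : ℤ) (hn : n ≠ 0) :
    shift2 K n m p = p ↔
      ∃ h : Polynomial K,
        p = Polynomial.aeval ((m : K) • (X 0 : MvPolynomial (Fin 2) K) - (n : K) • X 1) h := by
  obtain ⟨q, rfl⟩ := (linearChangeEquiv K m n hn).surjective p
  rw [shift2_linearChangeEquiv, (linearChangeEquiv K m n hn).injective.eq_iff,
    shift2_zero_eq_self_iff hn]
  simp_rw [← linearChangeEquiv_aeval_X_one hn, (linearChangeEquiv K m n hn).injective.eq_iff]
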